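/- For every weakly continuous operator T on M(Ω) with associated bounded transition kernel k, the positive part T⁺ of T taken in the Banach lattice L(M(Ω)) is again weakly continuous and its associated kernel is the pointwise positive part k₊, i.e., (T⁺μ)(A) = ∫ k₊(x,A) dμ(x). Consequently the weakly continuous operators form a vector sublattice of L(M(Ω)). -/

import Mathlib

/-!
For a signed measure `s` and a countable algebra `(eᵢ)` generating the σ-algebra (which exists
because `Ω` is Polish), `s⁺(A) = supᵢ s(A ∩ eᵢ)`: approximate a Hahn positive set of `s` by the
`eᵢ` in total variation. Hence `x ↦ k₊(x, A)` is measurable, `k₊` is a finite kernel, and it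
defines an operator `S` with `0, T ≤ S` on the positive cone. If `R` is another such operator
and `ν ≥ 0`, splitting `ν` along the set where a new term `k(x, A ∩ eₙ)` does not exceed the
running maximum shows inductively that `∫ max_{i ≤ n} k(x, A ∩ eᵢ) dν(x) ≤ (Rν)(A)`; dominated
convergence then gives `(Sν)(A) ≤ (Rν)(A)`.
-/

open MeasureTheory Topology Filter
open scoped NNReal ENNReal BoundedContinuousFunction

noncomputable def sInt {Ω : Type*} [MeasurableSpace Ω] (μ : SignedMeasure Ω) (f : Ω → ℝ) : ℝ :=
  (∫ x, f x ∂μ.toJordanDecomposition.posPart) - ∫ x, f x ∂μ.toJordanDecomposition.negPart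

def IsTransKernel {Ω : Type*} [MeasurableSpace Ω] (k : Ω → SignedMeasure Ω) : Prop :=
  ∀ A : Set Ω, MeasurableSet A → Measurable fun x => k x A

def IsBddKernel {Ω : Type*} [MeasurableSpace Ω] (k : Ω → SignedMeasure Ω) : Prop :=
  IsTransKernel k ∧ ∃ C : ℝ≥0, ∀ x, (k x).totalVariation Set.univ ≤ C

def GivenByKernel {Ω : Type*} [MeasurableSpace Ω]
    (T : SignedMeasure Ω →ₗ[ℝ] SignedMeasure Ω) (k : Ω → SignedMeasure Ω) : Prop :=
  ∀ (μ : SignedMeasure Ω) (A : Set Ω), MeasurableSet A → T μ A = sInt μ (fun x => k x A)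

def IsBdMeasurable {Ω : Type*} [MeasurableSpace Ω] (f : Ω → ℝ) : Prop :=
  Measurable f ∧ ∃ C : ℝ, ∀ x, |f x| ≤ C

instance totalVariation_isFiniteMeasure {Ω : Type*} [MeasurableSpace Ω] (μ : SignedMeasure Ω) :
    IsFiniteMeasure μ.totalVariation := by
  unfold SignedMeasure.totalVariation; infer_instance

namespace MeasureTheory

variable {Ω : Type*} [MeasurableSpace Ω]

lemma Measure.add_eq_add_of_toSignedMeasure_sub_eq {a b c d : Measure Ω} [IsFiniteMeasure a]
    [IsFiniteMeasure b] [IsFiniteMeasure c] [IsFiniteMeasure d]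
    (h : a.toSignedMeasure - b.toSignedMeasure = c.toSignedMeasure - d.toSignedMeasure) :
    a + d = c + b := by
  rwa [← Measure.toSignedMeasure_eq_toSignedMeasure_iff, Measure.toSignedMeasure_add,
    Measure.toSignedMeasure_add, ← sub_eq_sub_iff_add_eq_add]

namespace SignedMeasure

lemma eq_posPart_sub_negPart (μ : SignedMeasure Ω) :
    μ = μ.toJordanDecomposition.posPart.toSignedMeasure
      - μ.toJordanDecomposition.negPart.toSignedMeasure :=
  μ.toSignedMeasure_toJordanDecomposition.symm

lemma apply_mono_of_nonneg {w : SignedMeasure Ω} (hw : 0 ≤ w) {D A : Set Ω}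
    (hD : MeasurableSet D) (hA : MeasurableSet A) (hDA : D ⊆ A) : w D ≤ w A := by
  rw [← VectorMeasure.of_add_of_sdiff hD hA hDA]
  have h0 := VectorMeasure.le_iff.1 hw _ (hA.diff hD)
  rw [FunLike.coe_zero, Pi.zero_apply] at h0
  linarith

lemma exists_toSignedMeasure_eq_of_nonneg {μ : SignedMeasure Ω} (h : 0 ≤ μ) :
    ∃ (ν : Measure Ω) (_ : IsFiniteMeasure ν), ν.toSignedMeasure = μ := by
  have h' : 0 ≤[Set.univ] μ := by
    rwa [VectorMeasure.restrict_univ, VectorMeasure.restrict_univ]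
  exact ⟨μ.toMeasureOfZeroLE Set.univ MeasurableSet.univ h', inferInstance,
    toMeasureOfZeroLE_toSignedMeasure _ h'⟩

lemma abs_apply_sub_apply_le (s : SignedMeasure Ω) {D E : Set Ω} (hD : MeasurableSet D)
    (hE : MeasurableSet E) : |s D - s E| ≤ s.totalVariation.real (symmDiff D E) := by
  have split : ∀ {D E : Set Ω}, MeasurableSet D → MeasurableSet E →
      s D = s (D \ E) + s (D ∩ E) := fun hD hE => by
    rw [← VectorMeasure.of_union Set.disjoint_sdiff_inter (hD.diff hE) (hD.inter hE),
      Set.sdiff_union_inter]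
  rw [split hD hE, split hE hD, Set.inter_comm E D, add_sub_add_right_eq_sub, Set.symmDiff_def,
    measureReal_union disjoint_sdiff_sdiff (hE.diff hD)]
  calc |s (D \ E) - s (E \ D)| ≤ |s (D \ E)| + |s (E \ D)| := abs_sub _ _
    _ ≤ _ := add_le_add (s.norm_le_totalVariation _) (s.norm_le_totalVariation _)

theorem isLUB_posPart_apply {𝒜 : Set (Set Ω)} (h𝒜 : IsSetAlgebra 𝒜)
    (hgen : ‹MeasurableSpace Ω› = MeasurableSpace.generateFrom 𝒜) (s : SignedMeasure Ω)
    {A : Set Ω} (hA : MeasurableSet A) :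
    IsLUB ((fun t => s (A ∩ t)) '' 𝒜) (s.toJordanDecomposition.posPart.real A) := by
  have h𝒜meas : ∀ t ∈ 𝒜, MeasurableSet t := fun t ht =>
    hgen ▸ MeasurableSpace.measurableSet_generateFrom ht
  refine ⟨?_, fun b hb => le_of_forall_pos_lt_add fun ε hε => ?_⟩
  · rintro _ ⟨t, ht, rfl⟩
    have hAt := hA.inter (h𝒜meas t ht)
    dsimp only
    rw [s.apply_eq_posPart_real_sub_negPart_real hAt]
    linarith [measureReal_nonneg (μ := s.toJordanDecomposition.negPart) (s := A ∩ t),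
      measureReal_mono (μ := s.toJordanDecomposition.posPart) (Set.inter_subset_left (t := t))]
  · obtain ⟨i, hi, hi₀, -, hpos, -⟩ := s.toJordanDecomposition_spec
    obtain ⟨t, ht, hεt⟩ := (Measure.MeasureDense.of_generateFrom_isSetAlgebra_finite
      s.totalVariation h𝒜 hgen).approx i hi (measure_ne_top _ _) ε hε
    have hεt' : s.totalVariation.real (symmDiff i t) < ε := by
      rwa [measureReal_def, ← ENNReal.toReal_ofReal hε.le,
        ENNReal.toReal_lt_toReal (measure_ne_top _ _) ENNReal.ofReal_ne_top]
    have hclose : |s (A ∩ i) - s (A ∩ t)| ≤ s.totalVariation.real (symmDiff i t) :=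
      (s.abs_apply_sub_apply_le (hA.inter hi) (hA.inter (h𝒜meas t ht))).trans
        (measureReal_mono (by rw [← Set.inter_symmDiff_distrib_left]; exact Set.inter_subset_right))
    have hposA : s.toJordanDecomposition.posPart.real A = s (A ∩ i) := by
      rw [hpos, toMeasureOfZeroLE_real_apply _ hi₀ hi hA, Set.inter_comm]
    have hb' := hb ⟨t, ht, rfl⟩
    rw [hposA]
    linarith [(abs_sub_lt_iff.1 (hclose.trans_lt hεt')).1]

theorem exists_seq_isLUB_posPart_apply [MeasurableSpace.CountablyGenerated Ω] :
    ∃ e : ℕ → Set Ω, (∀ i, MeasurableSet (e i)) ∧ ∀ (s : SignedMeasure Ω) {A : Set Ω},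
      MeasurableSet A →
        IsLUB (Set.range fun i => s (A ∩ e i)) (s.toJordanDecomposition.posPart.real A) := by
  have h𝒜 := isSetAlgebra_generateSetAlgebra (𝒜 := MeasurableSpace.countableGeneratingSet Ω)
  have hgen : ‹MeasurableSpace Ω› = MeasurableSpace.generateFrom
      (generateSetAlgebra (MeasurableSpace.countableGeneratingSet Ω)) := by
    rw [generateFrom_generateSetAlgebra_eq, MeasurableSpace.generateFrom_countableGeneratingSet]
  obtain ⟨e, he⟩ := (countable_generateSetAlgebra
    (MeasurableSpace.countable_countableGeneratingSet (α := Ω))).exists_eq_range ⟨∅, h𝒜.empty_mem⟩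
  rw [he] at h𝒜 hgen
  refine ⟨e, fun i => hgen ▸ MeasurableSpace.measurableSet_generateFrom (Set.mem_range_self i),
    fun s A hA => ?_⟩
  rw [← Function.comp_def (fun t => s (A ∩ t)), Set.range_comp]
  exact s.isLUB_posPart_apply h𝒜 hgen hA

end SignedMeasure

end MeasureTheory

section BoundedIntegrands

variable {Ω : Type*} [MeasurableSpace Ω]

lemma IsBdMeasurable.integrable {f : Ω → ℝ} (hf : IsBdMeasurable f) (ν : Measure Ω)
    [IsFiniteMeasure ν] : Integrable f ν := by
  obtain ⟨hm, C, hC⟩ := hf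
  exact Integrable.of_bound hm.aestronglyMeasurable C (ae_of_all _ hC)

lemma IsBdMeasurable.sup {f g : Ω → ℝ} (hf : IsBdMeasurable f) (hg : IsBdMeasurable g) :
    IsBdMeasurable (f ⊔ g) := by
  obtain ⟨hfm, C, hC⟩ := hf
  obtain ⟨hgm, D, hD⟩ := hg
  exact ⟨hfm.sup hgm, max C D, fun x => abs_max_le_max_abs_abs.trans (max_le_max (hC x) (hD x))⟩

lemma sInt_eq_integral_sub_integral {μ : SignedMeasure Ω} {a b : Measure Ω} [IsFiniteMeasure a]
    [IsFiniteMeasure b] (h : μ = a.toSignedMeasure - b.toSignedMeasure) {f : Ω → ℝ}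
    (hf : IsBdMeasurable f) : sInt μ f = ∫ x, f x ∂a - ∫ x, f x ∂b := by
  have hab := congrArg (fun ν => ∫ x, f x ∂ν)
    (Measure.add_eq_add_of_toSignedMeasure_sub_eq (μ.eq_posPart_sub_negPart.symm.trans h))
  simp only [integral_add_measure (hf.integrable _) (hf.integrable _)] at hab
  rw [sInt]
  linarith

lemma sInt_toSignedMeasure (ν : Measure Ω) [IsFiniteMeasure ν] {f : Ω → ℝ}
    (hf : IsBdMeasurable f) : sInt ν.toSignedMeasure f = ∫ x, f x ∂ν := by
  rw [sInt_eq_integral_sub_integral (a := ν) (b := 0) (by simp) hf, integral_zero_measure, sub_zero]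

lemma sInt_add (μ ν : SignedMeasure Ω) {f : Ω → ℝ} (hf : IsBdMeasurable f) :
    sInt (μ + ν) f = sInt μ f + sInt ν f := by
  have h : μ + ν =
      (μ.toJordanDecomposition.posPart + ν.toJordanDecomposition.posPart).toSignedMeasure
      - (μ.toJordanDecomposition.negPart + ν.toJordanDecomposition.negPart).toSignedMeasure := by
    conv_lhs => rw [μ.eq_posPart_sub_negPart, ν.eq_posPart_sub_negPart]
    simp only [Measure.toSignedMeasure_add]
    abel
  rw [sInt_eq_integral_sub_integral h hf, sInt, sInt,
    integral_add_measure (hf.integrable _) (hf.integrable _),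
    integral_add_measure (hf.integrable _) (hf.integrable _)]
  ring

lemma sInt_neg (μ : SignedMeasure Ω) {f : Ω → ℝ} (hf : IsBdMeasurable f) :
    sInt (-μ) f = -sInt μ f := by
  have h : -μ = μ.toJordanDecomposition.negPart.toSignedMeasure
      - μ.toJordanDecomposition.posPart.toSignedMeasure := by
    conv_lhs => rw [μ.eq_posPart_sub_negPart]
    exact neg_sub _ _
  rw [sInt_eq_integral_sub_integral h hf, sInt, neg_sub]

lemma sInt_nnreal_smul (r : ℝ≥0) (μ : SignedMeasure Ω) {f : Ω → ℝ} (hf : IsBdMeasurable f) :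
    sInt (r • μ) f = r * sInt μ f := by
  have h : r • μ = (r • μ.toJordanDecomposition.posPart).toSignedMeasure
      - (r • μ.toJordanDecomposition.negPart).toSignedMeasure := by
    conv_lhs => rw [μ.eq_posPart_sub_negPart]
    rw [Measure.toSignedMeasure_smul, Measure.toSignedMeasure_smul, smul_sub]
  rw [sInt_eq_integral_sub_integral h hf, integral_smul_nnreal_measure,
    integral_smul_nnreal_measure, sInt, ← smul_sub, NNReal.smul_def, smul_eq_mul]

lemma sInt_smul (c : ℝ) (μ : SignedMeasure Ω) {f : Ω → ℝ} (hf : IsBdMeasurable f) :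
    sInt (c • μ) f = c * sInt μ f := by
  rcases le_or_gt 0 c with hc | hc
  · lift c to ℝ≥0 using hc
    exact sInt_nnreal_smul c μ hf
  · lift -c to ℝ≥0 using (neg_nonneg.2 hc.le) with r hr
    obtain rfl : c = -r := by linarith
    rw [show -(r : ℝ) • μ = -((r : ℝ) • μ) from neg_smul (r : ℝ) μ, sInt_neg _ hf, neg_mul, neg_inj]
    exact sInt_nnreal_smul r μ hf

end BoundedIntegrands

namespace ProbabilityTheory.Kernel

variable {α β : Type*} [MeasurableSpace α] [MeasurableSpace β] (κ : Kernel α β) [IsFiniteKernel κ]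

lemma isBdMeasurable_measureReal {s : Set β} (hs : MeasurableSet s) :
    IsBdMeasurable fun a => (κ a).real s :=
  ⟨(κ.measurable_coe hs).ennreal_toReal, κ.bound.toReal, fun a => by
    rw [abs_of_nonneg measureReal_nonneg]
    exact ENNReal.toReal_mono κ.bound_ne_top (κ.measure_le_bound a s)⟩

lemma comp_measureReal (ν : Measure α) [IsFiniteMeasure ν] {s : Set β} (hs : MeasurableSet s) :
    (κ ∘ₘ ν).real s = ∫ a, (κ a).real s ∂ν := by
  rw [measureReal_def, Measure.bind_apply hs κ.aemeasurable,
    ← integral_toReal (κ.measurable_coe hs).aemeasurable (ae_of_all _ fun a => measure_lt_top _ _)]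
  rfl

noncomputable def compSignedMeasure (μ : SignedMeasure α) : SignedMeasure β :=
  (κ ∘ₘ μ.toJordanDecomposition.posPart).toSignedMeasure
    - (κ ∘ₘ μ.toJordanDecomposition.negPart).toSignedMeasure

lemma compSignedMeasure_apply (μ : SignedMeasure α) {s : Set β} (hs : MeasurableSet s) :
    κ.compSignedMeasure μ s = sInt μ fun a => (κ a).real s := by
  rw [compSignedMeasure, _root_.sub_apply, Measure.toSignedMeasure_apply_measurable hs,
    Measure.toSignedMeasure_apply_measurable hs, comp_measureReal _ _ hs, comp_measureReal _ _ hs,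
    sInt]

noncomputable def compSignedMeasureₗ : SignedMeasure α →ₗ[ℝ] SignedMeasure β where
  toFun := κ.compSignedMeasure
  map_add' μ ν := by
    ext s hs
    rw [_root_.add_apply, compSignedMeasure_apply _ _ hs, compSignedMeasure_apply _ _ hs,
      compSignedMeasure_apply _ _ hs, sInt_add _ _ (κ.isBdMeasurable_measureReal hs)]
  map_smul' c μ := by
    ext s hs
    rw [_root_.smul_apply, compSignedMeasure_apply _ _ hs, compSignedMeasure_apply _ _ hs,
      sInt_smul _ _ (κ.isBdMeasurable_measureReal hs)]
    rfl

end ProbabilityTheory.Kernel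

section Dominated

variable {Ω : Type*} [MeasurableSpace Ω] {R : SignedMeasure Ω →ₗ[ℝ] SignedMeasure Ω} {A : Set Ω}

lemma integral_sup_le {f g : Ω → ℝ} (hf : IsBdMeasurable f) (hg : IsBdMeasurable g)
    (hfR : ∀ (ν : Measure Ω) [IsFiniteMeasure ν], ∫ x, f x ∂ν ≤ R ν.toSignedMeasure A)
    (hgR : ∀ (ν : Measure Ω) [IsFiniteMeasure ν], ∫ x, g x ∂ν ≤ R ν.toSignedMeasure A)
    (ν : Measure Ω) [IsFiniteMeasure ν] : ∫ x, (f ⊔ g) x ∂ν ≤ R ν.toSignedMeasure A := by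
  set B := {x | g x ≤ f x}
  have hB : MeasurableSet B := measurableSet_le hg.1 hf.1
  have hsplit : (ν.restrict B).toSignedMeasure + (ν.restrict Bᶜ).toSignedMeasure
      = ν.toSignedMeasure := by
    rw [← Measure.toSignedMeasure_add,
      Measure.toSignedMeasure_congr (ν.restrict_add_restrict_compl hB)]
  calc ∫ x, (f ⊔ g) x ∂ν = ∫ x in B, f x ∂ν + ∫ x in Bᶜ, g x ∂ν := by
        rw [← integral_add_compl hB ((hf.sup hg).integrable ν)]
        congr 1
        · exact setIntegral_congr_fun hB fun x hx => sup_eq_left.2 hx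
        · exact setIntegral_congr_fun hB.compl fun x hx =>
            sup_eq_right.2 (not_le.1 (show ¬g x ≤ f x from hx)).le
    _ ≤ R (ν.restrict B).toSignedMeasure A + R (ν.restrict Bᶜ).toSignedMeasure A :=
        add_le_add (hfR _) (hgR _)
    _ = R ν.toSignedMeasure A := by rw [← _root_.add_apply, ← map_add, hsplit]

lemma integral_partialSups_le {f : ℕ → Ω → ℝ} (hf : ∀ i, IsBdMeasurable (f i))
    (hfR : ∀ i (ν : Measure Ω) [IsFiniteMeasure ν], ∫ x, f i x ∂ν ≤ R ν.toSignedMeasure A)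
    (n : ℕ) (ν : Measure Ω) [IsFiniteMeasure ν] :
    ∫ x, partialSups f n x ∂ν ≤ R ν.toSignedMeasure A := by
  suffices IsBdMeasurable (partialSups f n) ∧
      ∀ (ν : Measure Ω) [IsFiniteMeasure ν], ∫ x, partialSups f n x ∂ν ≤ R ν.toSignedMeasure A from
    this.2 ν
  induction n with
  | zero => exact ⟨hf 0, hfR 0⟩
  | succ n ih =>
    rw [partialSups_add_one]
    exact ⟨ih.1.sup (hf _), integral_sup_le ih.1 (hf _) ih.2 (hfR _)⟩

end Dominated

section KernelOperators

open ProbabilityTheory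

variable {Ω : Type*} [MeasurableSpace Ω] {T S : SignedMeasure Ω →ₗ[ℝ] SignedMeasure Ω}
  {k l : Ω → SignedMeasure Ω}

lemma IsBddKernel.exists_abs_apply_le (hk : IsBddKernel k) : ∃ C : ℝ, ∀ x A, |k x A| ≤ C := by
  obtain ⟨-, C, hC⟩ := hk
  exact ⟨C, fun x A => ((k x).norm_le_totalVariation A).trans <|
    (measureReal_mono (Set.subset_univ A)).trans (ENNReal.toReal_le_coe_of_le_coe (hC x))⟩

lemma IsBddKernel.isBdMeasurable_apply (hk : IsBddKernel k) {A : Set Ω} (hA : MeasurableSet A) :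
    IsBdMeasurable fun x => k x A :=
  ⟨hk.1 A hA, hk.exists_abs_apply_le.imp fun _ hC x => hC x A⟩

lemma GivenByKernel.apply_toSignedMeasure (hT : GivenByKernel T k)
    (hk : ∀ A, MeasurableSet A → IsBdMeasurable fun x => k x A) (ν : Measure Ω)
    [IsFiniteMeasure ν] {A : Set Ω} (hA : MeasurableSet A) :
    T ν.toSignedMeasure A = ∫ x, k x A ∂ν := by
  rw [hT _ _ hA, sInt_toSignedMeasure _ (hk A hA)]

lemma GivenByKernel.le_of_le (hT : GivenByKernel T k) (hS : GivenByKernel S l)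
    (hk : ∀ A, MeasurableSet A → IsBdMeasurable fun x => k x A)
    (hl : ∀ A, MeasurableSet A → IsBdMeasurable fun x => l x A)
    (hkl : ∀ x A, MeasurableSet A → k x A ≤ l x A) {μ : SignedMeasure Ω} (hμ : 0 ≤ μ) :
    T μ ≤ S μ := by
  obtain ⟨ν, _, rfl⟩ := SignedMeasure.exists_toSignedMeasure_eq_of_nonneg hμ
  refine VectorMeasure.le_iff.2 fun A hA => ?_
  rw [hT.apply_toSignedMeasure hk ν hA, hS.apply_toSignedMeasure hl ν hA]
  exact integral_mono ((hk A hA).integrable ν) ((hl A hA).integrable ν) fun x => hkl x A hA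

lemma givenByKernel_zero : GivenByKernel (0 : SignedMeasure Ω →ₗ[ℝ] SignedMeasure Ω) 0 :=
  fun μ A hA => by simp [sInt]

lemma GivenByKernel.nonneg (hS : GivenByKernel S l)
    (hl : ∀ A, MeasurableSet A → IsBdMeasurable fun x => l x A)
    (hl₀ : ∀ x A, MeasurableSet A → 0 ≤ l x A) {μ : SignedMeasure Ω} (hμ : 0 ≤ μ) : 0 ≤ S μ :=
  givenByKernel_zero.le_of_le hS (fun _ _ => ⟨measurable_const, 0, by simp⟩) hl hl₀ hμ

lemma givenByKernel_compSignedMeasureₗ (κ : Kernel Ω Ω) [IsFiniteKernel κ] :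
    GivenByKernel κ.compSignedMeasureₗ fun x => (κ x).toSignedMeasure := fun μ A hA => by
  simp_rw [Measure.toSignedMeasure_apply_measurable hA]
  exact κ.compSignedMeasure_apply μ hA

variable [MeasurableSpace.CountablyGenerated Ω]

lemma IsTransKernel.measurable_posPart (hk : IsTransKernel k) :
    Measurable fun x => (k x).toJordanDecomposition.posPart := by
  obtain ⟨e, he, hlub⟩ := SignedMeasure.exists_seq_isLUB_posPart_apply (Ω := Ω)
  refine Measure.measurable_of_measurable_coe _ fun A hA => ?_
  have hreal : Measurable fun x => (k x).toJordanDecomposition.posPart.real A := by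
    simp_rw [← (hlub (k _) hA).ciSup_eq]
    exact Measurable.iSup fun i => hk _ (hA.inter (he i))
  convert hreal.ennreal_ofReal with x
  exact (ofReal_measureReal (measure_ne_top _ _)).symm

noncomputable def IsTransKernel.posPart (hk : IsTransKernel k) : Kernel Ω Ω :=
  ⟨fun x => (k x).toJordanDecomposition.posPart, hk.measurable_posPart⟩

lemma IsBddKernel.isFiniteKernel_posPart (hk : IsBddKernel k) : IsFiniteKernel hk.1.posPart := by
  obtain ⟨-, C, hC⟩ := hk
  refine ⟨⟨C, ENNReal.coe_lt_top, fun x => le_trans ?_ (hC x)⟩⟩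
  rw [SignedMeasure.totalVariation, Measure.add_apply]
  exact le_self_add

lemma IsBddKernel.exists_givenByKernel_posPart (hk : IsBddKernel k) :
    ∃ S : SignedMeasure Ω →ₗ[ℝ] SignedMeasure Ω,
      GivenByKernel S fun x => (k x).toJordanDecomposition.posPart.toSignedMeasure :=
  have := hk.isFiniteKernel_posPart
  ⟨hk.1.posPart.compSignedMeasureₗ, givenByKernel_compSignedMeasureₗ hk.1.posPart⟩

lemma IsBddKernel.isBdMeasurable_posPart_apply (hk : IsBddKernel k) {A : Set Ω}
    (hA : MeasurableSet A) :
    IsBdMeasurable fun x => (k x).toJordanDecomposition.posPart.toSignedMeasure A := by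
  have := hk.isFiniteKernel_posPart
  simp_rw [Measure.toSignedMeasure_apply_measurable hA]
  exact hk.1.posPart.isBdMeasurable_measureReal hA

theorem GivenByKernel.integral_posPart_apply_le (hk : IsBddKernel k) (hT : GivenByKernel T k)
    {R : SignedMeasure Ω →ₗ[ℝ] SignedMeasure Ω} (hR : ∀ μ, 0 ≤ μ → 0 ≤ R μ ∧ T μ ≤ R μ)
    (ν : Measure Ω) [IsFiniteMeasure ν] {A : Set Ω} (hA : MeasurableSet A) :
    ∫ x, (k x).toJordanDecomposition.posPart.real A ∂ν ≤ R ν.toSignedMeasure A := by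
  obtain ⟨e, he, hlub⟩ := SignedMeasure.exists_seq_isLUB_posPart_apply (Ω := Ω)
  obtain ⟨C, hC⟩ := hk.exists_abs_apply_le
  set f : ℕ → Ω → ℝ := fun i x => k x (A ∩ e i)
  have hfR : ∀ i (ν : Measure Ω) [IsFiniteMeasure ν], ∫ x, f i x ∂ν ≤ R ν.toSignedMeasure A := by
    intro i ν _
    have hAi := hA.inter (he i)
    have hν := hR _ ν.zero_le_toSignedMeasure
    calc ∫ x, f i x ∂ν = T ν.toSignedMeasure (A ∩ e i) :=
          (hT.apply_toSignedMeasure (fun _ => hk.isBdMeasurable_apply) ν hAi).symm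
      _ ≤ R ν.toSignedMeasure (A ∩ e i) := VectorMeasure.le_iff.1 hν.2 _ hAi
      _ ≤ R ν.toSignedMeasure A :=
          SignedMeasure.apply_mono_of_nonneg hν.1 hAi hA Set.inter_subset_left
  have hbound : ∀ n x, ‖partialSups f n x‖ ≤ C := fun n x => by
    rw [Pi.partialSups_apply, Real.norm_eq_abs, abs_le]
    exact ⟨(abs_le.1 (hC x _)).1.trans (le_partialSups_of_le (fun i => f i x) (Nat.zero_le n)),
      partialSups_le _ _ _ fun i _ => (abs_le.1 (hC x _)).2⟩
  have hlim : ∀ x, Tendsto (fun n => partialSups f n x) atTop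
      (𝓝 ((k x).toJordanDecomposition.posPart.real A)) := fun x => by
    simp only [Pi.partialSups_apply]
    refine tendsto_atTop_isLUB (partialSups_monotone _) ?_
    rw [IsLUB, upperBounds_range_partialSups]
    exact hlub (k x) hA
  have hmeas : ∀ n, Measurable (partialSups f n) := fun n => by
    rw [partialSups_apply]
    exact Finset.measurable_sup' _ fun i _ => hk.1 _ (hA.inter (he i))
  exact le_of_tendsto (tendsto_integral_of_dominated_convergence (fun _ => C)
      (fun n => (hmeas n).aestronglyMeasurable) (integrable_const C)
      (fun n => ae_of_all _ (hbound n)) (ae_of_all _ hlim))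
    (Eventually.of_forall fun n =>
      integral_partialSups_le (fun i => hk.isBdMeasurable_apply (hA.inter (he i))) hfR n ν)

lemma GivenByKernel.le_of_upperBound
    (hS : GivenByKernel S fun x => (k x).toJordanDecomposition.posPart.toSignedMeasure)
    (hk : IsBddKernel k) (hT : GivenByKernel T k)
    {R : SignedMeasure Ω →ₗ[ℝ] SignedMeasure Ω} (hR : ∀ μ, 0 ≤ μ → 0 ≤ R μ ∧ T μ ≤ R μ)
    {μ : SignedMeasure Ω} (hμ : 0 ≤ μ) : S μ ≤ R μ := by
  obtain ⟨ν, _, rfl⟩ := SignedMeasure.exists_toSignedMeasure_eq_of_nonneg hμ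
  refine VectorMeasure.le_iff.2 fun A hA => ?_
  rw [hS.apply_toSignedMeasure (fun _ => hk.isBdMeasurable_posPart_apply) ν hA]
  simp_rw [Measure.toSignedMeasure_apply_measurable hA]
  exact hT.integral_posPart_apply_le hk hR ν hA

end KernelOperators

theorem stmt12 {Ω : Type*} [TopologicalSpace Ω] [PolishSpace Ω] [MeasurableSpace Ω] [BorelSpace Ω]
    (T : SignedMeasure Ω →ₗ[ℝ] SignedMeasure Ω) (k : Ω → SignedMeasure Ω)
    (hk : IsBddKernel k) (hT : GivenByKernel T k) :
    ∃ S : SignedMeasure Ω →ₗ[ℝ] SignedMeasure Ω,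
      GivenByKernel S (fun x => ((k x).toJordanDecomposition.posPart).toSignedMeasure) ∧
      (∀ μ : SignedMeasure Ω, 0 ≤ μ → 0 ≤ S μ ∧ T μ ≤ S μ) ∧
      ∀ R : SignedMeasure Ω →ₗ[ℝ] SignedMeasure Ω,
        (∀ μ : SignedMeasure Ω, 0 ≤ μ → 0 ≤ R μ ∧ T μ ≤ R μ) →
        ∀ μ : SignedMeasure Ω, 0 ≤ μ → S μ ≤ R μ := by
  obtain ⟨S, hS⟩ := hk.exists_givenByKernel_posPart
  have hpos := fun A (hA : MeasurableSet A) => hk.isBdMeasurable_posPart_apply hA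
  refine ⟨S, hS, fun μ hμ => ⟨hS.nonneg hpos (fun x A hA => ?_) hμ,
    hT.le_of_le hS (fun A hA => hk.isBdMeasurable_apply hA) hpos (fun x A hA => ?_) hμ⟩,
    fun R hR μ hμ => hS.le_of_upperBound hk hT hR hμ⟩
  · exact VectorMeasure.le_iff.1 (Measure.zero_le_toSignedMeasure _) A hA
  · rw [Measure.toSignedMeasure_apply_measurable hA,
      (k x).apply_eq_posPart_real_sub_negPart_real hA]
    exact sub_le_self _ measureReal_nonneg
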